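/- Fix m ≥ 1, real numbers θ_Y and δ ≥ 0, and let v, v' ∈ {−1, 1}^m differ in exactly one coordinate. Let P_v(y, λ) = (1/z_v) exp( θ_Y y + δ Σ_{j=1}^m v_j λ_j y ) and P_{v'}(y, λ) = (1/z_{v'}) exp( θ_Y y + δ Σ_{j=1}^m v'_j λ_j y ) be the corresponding probability mass functions on {−1,1} × {−1,1}^m. Then KL(P_v ‖ P_{v'}) = 2δ ( e^δ / cosh(δ) − 1 ) ≤ 2δ^2. -/

import Mathlib

open Finset

/-- Spin value of a boolean: `true ↦ 1`, `false ↦ -1`. -/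
def sgn (b : Bool) : ℝ := if b then 1 else -1

/-- Unnormalized weight of the binary Ising distribution `P_v` on
`{-1,1} × {-1,1}^m` with canonical parameters `θ_Y` and `δ v`. -/
noncomputable def isingWeight (m : ℕ) (θY δ : ℝ) (v : Fin m → ℝ)
    (y : Bool) (lam : Fin m → Bool) : ℝ :=
  Real.exp (θY * sgn y + δ * ∑ j, v j * sgn (lam j) * sgn y)

/-- Partition function of `P_v`. -/
noncomputable def isingZ (m : ℕ) (θY δ : ℝ) (v : Fin m → ℝ) : ℝ :=
  ∑ y : Bool, ∑ lam : Fin m → Bool, isingWeight m θY δ v y lam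

/-- The probability mass function of `P_v`. -/
noncomputable def isingPMF (m : ℕ) (θY δ : ℝ) (v : Fin m → ℝ)
    (s : Bool × (Fin m → Bool)) : ℝ :=
  isingWeight m θY δ v s.1 s.2 / isingZ m θY δ v

/-- Kullback–Leibler divergence between probability mass functions on a finite
type, with value `∞` when absolute continuity fails. -/
noncomputable def klFin {α : Type*} [Fintype α] (P Q : α → ℝ) : ENNReal :=
  if ∀ a, 0 < P a → 0 < Q a then
    ENNReal.ofReal (∑ a, if 0 < P a then P a * Real.log (P a / Q a) else 0)
  else ⊤

/-! Flipping the `i`-th observed spin carries the weights of `P_{v'}` onto those of `P_v`, so the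
two partition functions agree and `log (P_v / P_{v'}) = 2 δ v_i λ_i y`. The divergence is thus
`2 δ v_i E_v[λ_i y]`, and pairing each configuration with its flip gives
`E_v[λ_i y] = tanh (δ v_i)`, so `KL = 2 δ tanh δ`. The bound is `tanh δ ≤ δ`, i.e.
`sinh δ ≤ δ cosh δ`, whose difference has derivative `δ sinh δ ≥ 0`. -/

open Real

lemma sinh_le_mul_cosh {x : ℝ} (hx : 0 ≤ x) : sinh x ≤ x * cosh x := by
  have hmono : Monotone fun y => y * cosh y - sinh y := by
    refine monotone_of_hasDerivAt_nonneg (f' := fun y => y * sinh y) (fun y => ?_) fun y => ?_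
    · exact (((hasDerivAt_id' y).mul (hasDerivAt_cosh y)).sub (hasDerivAt_sinh y)).congr_deriv
        (by ring)
    · rcases le_total 0 y with hy | hy
      · exact mul_nonneg hy (sinh_nonneg_iff.2 hy)
      · exact mul_nonneg_of_nonpos_of_nonpos hy (sinh_nonpos_iff.2 hy)
  simpa using hmono hx

lemma tanh_le_self {x : ℝ} (hx : 0 ≤ x) : tanh x ≤ x := by
  rw [tanh_eq_sinh_div_cosh, div_le_iff₀ (cosh_pos x)]
  exact sinh_le_mul_cosh hx

lemma tanh_eq_exp_div_cosh_sub_one (x : ℝ) : tanh x = exp x / cosh x - 1 := by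
  rw [tanh_eq_sinh_div_cosh, ← cosh_add_sinh, add_div, div_self (cosh_pos x).ne']
  ring

lemma mul_tanh_mul_of_eq_one_or {s : ℝ} (hs : s = 1 ∨ s = -1) (x : ℝ) :
    s * tanh (x * s) = tanh x := by
  rcases hs with rfl | rfl <;> simp [tanh_neg]

lemma sub_tanh_eq_exp_mul_add_tanh {s : ℝ} (hs : s = 1 ∨ s = -1) (t : ℝ) :
    s - tanh t = exp (-(2 * t * s)) * (s + tanh t) := by
  have key : ∀ u, 1 - tanh u = exp (-(2 * u)) * (1 + tanh u) := fun u => by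
    have hc := (cosh_pos u).ne'
    rw [tanh_eq_sinh_div_cosh, one_sub_div hc, one_add_div hc, cosh_sub_sinh, cosh_add_sinh,
      mul_div_assoc', ← exp_add]
    ring_nf
  rcases hs with rfl | rfl
  · simpa using key t
  · have h := key (-t)
    rw [tanh_neg] at h
    simp only [mul_neg, mul_one, neg_neg] at h ⊢
    linear_combination -h

lemma sgn_not (b : Bool) : sgn (!b) = -sgn b := by
  cases b <;> simp [sgn]

lemma sgn_mul_sgn_eq_one_or (a b : Bool) : sgn a * sgn b = 1 ∨ sgn a * sgn b = -1 := by
  cases a <;> cases b <;> simp [sgn]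

lemma klFin_of_pos {α : Type*} [Fintype α] {P Q : α → ℝ} (hP : ∀ a, 0 < P a)
    (hQ : ∀ a, 0 < Q a) : klFin P Q = ENNReal.ofReal (∑ a, P a * log (P a / Q a)) := by
  simp only [klFin, hP, hQ, implies_true, if_true]

section flip

variable {ι : Type*} [DecidableEq ι]

def flipAt (i : ι) (lam : ι → Bool) : ι → Bool :=
  Function.update lam i (!lam i)

lemma flipAt_apply (i j : ι) (lam : ι → Bool) :
    flipAt i lam j = if j = i then !lam i else lam j := by
  by_cases hj : j = i <;> simp [flipAt, hj]

lemma flipAt_involutive (i : ι) : Function.Involutive (flipAt i) := by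
  intro lam
  ext j
  by_cases hj : j = i <;> simp [flipAt_apply, hj]

lemma flipAt_ne_self (i : ι) (lam : ι → Bool) : flipAt i lam ≠ lam := fun h => by
  simpa [flipAt] using congrFun h i

end flip

section ising

variable {m : ℕ} {θY δ : ℝ} {v v' : Fin m → ℝ} {i : Fin m}

lemma isingZ_pos : 0 < isingZ m θY δ v :=
  sum_pos (fun _ _ => sum_pos (fun _ _ => exp_pos _) univ_nonempty) univ_nonempty

lemma isingWeight_pos (y : Bool) (lam : Fin m → Bool) : 0 < isingWeight m θY δ v y lam :=
  exp_pos _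

lemma isingPMF_pos (a : Bool × (Fin m → Bool)) : 0 < isingPMF m θY δ v a :=
  div_pos (isingWeight_pos _ _) isingZ_pos

lemma isingWeight_flipAt (y : Bool) (lam : Fin m → Bool) :
    isingWeight m θY δ v y (flipAt i lam) =
      isingWeight m θY δ v y lam * exp (-(2 * (δ * v i) * (sgn (lam i) * sgn y))) := by
  have hsum : ∑ j, v j * sgn (flipAt i lam j) * sgn y - ∑ j, v j * sgn (lam j) * sgn y =
      -2 * (v i * (sgn (lam i) * sgn y)) := by
    rw [← sum_sub_distrib, sum_eq_single i (fun j _ hj => by simp [flipAt_apply, hj]) (by simp)]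
    simp only [flipAt_apply, if_true, sgn_not]
    ring
  rw [isingWeight, isingWeight, ← exp_add]
  congr 1
  linear_combination δ * hsum

lemma isingWeight_of_neighbor (hi : v' i = -v i) (hne : ∀ j ≠ i, v' j = v j) (y : Bool)
    (lam : Fin m → Bool) :
    isingWeight m θY δ v' y lam = isingWeight m θY δ v y (flipAt i lam) := by
  simp only [isingWeight]
  congr 3
  refine sum_congr rfl fun j _ => ?_
  by_cases hj : j = i
  · subst hj
    simp [flipAt_apply, hi, sgn_not]
  · simp [flipAt_apply, hj, hne j hj]

lemma isingZ_of_neighbor (hi : v' i = -v i) (hne : ∀ j ≠ i, v' j = v j) :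
    isingZ m θY δ v' = isingZ m θY δ v := by
  refine sum_congr rfl fun y _ => ?_
  simp only [isingWeight_of_neighbor hi hne]
  exact Equiv.sum_comp ((flipAt_involutive i).toPerm _) (isingWeight m θY δ v y)

lemma isingPMF_div_of_neighbor (hi : v' i = -v i) (hne : ∀ j ≠ i, v' j = v j)
    (a : Bool × (Fin m → Bool)) :
    isingPMF m θY δ v a / isingPMF m θY δ v' a =
      exp (2 * (δ * v i) * (sgn (a.2 i) * sgn a.1)) := by
  rw [isingPMF, isingPMF, isingZ_of_neighbor hi hne, div_div_div_cancel_right₀ isingZ_pos.ne',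
    isingWeight_of_neighbor hi hne, isingWeight_flipAt,
    div_mul_cancel_left₀ (isingWeight_pos _ _).ne', ← exp_neg, neg_neg]

lemma sum_isingWeight_mul_spin (y : Bool) :
    ∑ lam, isingWeight m θY δ v y lam * (sgn (lam i) * sgn y) =
      tanh (δ * v i) * ∑ lam, isingWeight m θY δ v y lam := by
  have hpair : ∀ lam, isingWeight m θY δ v y lam * (sgn (lam i) * sgn y - tanh (δ * v i)) +
      isingWeight m θY δ v y (flipAt i lam) * (sgn (flipAt i lam i) * sgn y - tanh (δ * v i))
        = 0 := fun lam => by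
    rw [isingWeight_flipAt, flipAt_apply, if_pos rfl, sgn_not,
      sub_tanh_eq_exp_mul_add_tanh (sgn_mul_sgn_eq_one_or _ _)]
    ring
  have hzero :
      ∑ lam, isingWeight m θY δ v y lam * (sgn (lam i) * sgn y - tanh (δ * v i)) = 0 :=
    sum_ninvolution (flipAt i) hpair (fun lam _ => flipAt_ne_self i lam) (fun _ => mem_univ _)
      (flipAt_involutive i)
  simp only [mul_sub, sum_sub_distrib, sub_eq_zero] at hzero
  rw [hzero, mul_sum]
  exact sum_congr rfl fun _ _ => mul_comm _ _

lemma sum_isingPMF_mul_spin :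
    ∑ a, isingPMF m θY δ v a * (sgn (a.2 i) * sgn a.1) = tanh (δ * v i) := by
  simp only [isingPMF, div_mul_eq_mul_div, ← sum_div, Fintype.sum_prod_type,
    sum_isingWeight_mul_spin, ← mul_sum]
  exact mul_div_cancel_right₀ _ isingZ_pos.ne'

lemma klFin_isingPMF_of_neighbor (hv : v i = 1 ∨ v i = -1) (hi : v' i = -v i)
    (hne : ∀ j ≠ i, v' j = v j) :
    klFin (isingPMF m θY δ v) (isingPMF m θY δ v') = ENNReal.ofReal (2 * δ * tanh δ) := by
  rw [klFin_of_pos isingPMF_pos isingPMF_pos]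
  congr 1
  calc ∑ a, isingPMF m θY δ v a * log (isingPMF m θY δ v a / isingPMF m θY δ v' a)
      = 2 * δ * v i * ∑ a, isingPMF m θY δ v a * (sgn (a.2 i) * sgn a.1) := by
        rw [mul_sum]
        refine sum_congr rfl fun a _ => ?_
        rw [isingPMF_div_of_neighbor hi hne, log_exp]
        ring
    _ = 2 * δ * tanh δ := by
        rw [sum_isingPMF_mul_spin, mul_assoc, mul_tanh_mul_of_eq_one_or hv]

end ising

theorem ising_neighbor_KL_general (m : ℕ) (θY δ : ℝ) (hδ : 0 ≤ δ)
    (v v' : Fin m → ℝ) (hv : ∀ j, v j = 1 ∨ v j = -1) (hv' : ∀ j, v' j = 1 ∨ v' j = -1)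
    (hdiff : ∃ i, v i ≠ v' i ∧ ∀ j, j ≠ i → v j = v' j) :
    klFin (isingPMF m θY δ v) (isingPMF m θY δ v') =
        ENNReal.ofReal (2 * δ * (Real.exp δ / Real.cosh δ - 1)) ∧
      klFin (isingPMF m θY δ v) (isingPMF m θY δ v') ≤
        ENNReal.ofReal (2 * δ ^ 2) := by
  obtain ⟨i, hvi, hoff⟩ := hdiff
  have hi : v' i = -v i := by
    rcases hv i with h | h <;> rcases hv' i with h' | h' <;> simp_all
  rw [klFin_isingPMF_of_neighbor (hv i) hi fun j hj => (hoff j hj).symm,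
    ← tanh_eq_exp_div_cosh_sub_one]
  exact ⟨rfl, ENNReal.ofReal_le_ofReal (by nlinarith [tanh_le_self hδ])⟩

/-- KL divergence between neighboring members of the binary Ising family: if `v`
and `v'` differ in exactly one coordinate, then
`KL(P_v ‖ P_{v'}) = 2δ(e^δ/cosh δ − 1) ≤ 2δ²`. -/
theorem ising_neighbor_KL (m : ℕ) (hm : 1 ≤ m) (θY δ : ℝ) (hδ : 0 ≤ δ)
    (v v' : Fin m → ℝ) (hv : ∀ j, v j = 1 ∨ v j = -1) (hv' : ∀ j, v' j = 1 ∨ v' j = -1)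
    (hdiff : ∃ i, v i ≠ v' i ∧ ∀ j, j ≠ i → v j = v' j) :
    klFin (isingPMF m θY δ v) (isingPMF m θY δ v') =
        ENNReal.ofReal (2 * δ * (Real.exp δ / Real.cosh δ - 1)) ∧
      klFin (isingPMF m θY δ v) (isingPMF m θY δ v') ≤
        ENNReal.ofReal (2 * δ ^ 2) :=
  ising_neighbor_KL_general m θY δ hδ v v' hv hv' hdiff
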